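/- arXiv:1809.00795 — 5 statements merged into one kernel-verified Lean document; each statement's English description precedes it below -/
import Mathlib

section
/- Let V be an n×n Hermitian-matrix-valued function on ℝ, S an n×n Hermitian-matrix-valued continuously differentiable function, and Φ an n-component complex vector-valued twice differentiable function satisfying -Φ'' + VΦ = EΦ for a real number E. Then for all x, -(d/dx)[Φ† Φ' + Φ† S Φ] + |Φ' + SΦ|² + Φ†(V + S' - S²)Φ = E|Φ|². -/
/-!
Differentiate `Φ†Φ' + Φ†SΦ` by the product rule. Since `S` is Hermitian, `|Φ' + SΦ|²` expands to
`|Φ'|² + Φ'†SΦ + Φ†SΦ' + Φ†S²Φ`, which cancels every term of the derivative except `Φ†Φ''` and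
`Φ†S'Φ`; the Schrödinger equation then turns `Φ†(VΦ - Φ'')` into `E|Φ|²`.
-/

open Matrix

section Derivatives

variable {𝕜 : Type*} [RCLike 𝕜] {m ι : Type*} [Fintype ι] {x : ℝ}

theorem hasDerivAt_star_dotProduct {u v : ℝ → ι → 𝕜} {u' v' : ι → 𝕜}
    (hu : ∀ i, HasDerivAt (fun t => u t i) (u' i) x)
    (hv : ∀ i, HasDerivAt (fun t => v t i) (v' i) x) :
    HasDerivAt (fun t => star (u t) ⬝ᵥ v t) (star u' ⬝ᵥ v x + star (u x) ⬝ᵥ v') x := by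
  simp only [dotProduct, Pi.star_apply, ← Finset.sum_add_distrib]
  exact HasDerivAt.fun_sum fun i _ => (hu i).star.mul (hv i)

theorem hasDerivAt_mulVec_apply {A : ℝ → Matrix m ι 𝕜} {v : ℝ → ι → 𝕜} {A' : Matrix m ι 𝕜}
    {v' : ι → 𝕜} (hA : ∀ i j, HasDerivAt (fun t => A t i j) (A' i j) x)
    (hv : ∀ j, HasDerivAt (fun t => v t j) (v' j) x) (i : m) :
    HasDerivAt (fun t => (A t *ᵥ v t) i) ((A' *ᵥ v x + A x *ᵥ v') i) x := by
  simp only [mulVec, dotProduct, Pi.add_apply, ← Finset.sum_add_distrib]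
  exact HasDerivAt.fun_sum fun j _ => (hA i j).mul (hv j)

end Derivatives

section Hermitian

variable {𝕜 ι : Type*} [Semiring 𝕜] [StarRing 𝕜] [Fintype ι] {S : Matrix ι ι 𝕜}

theorem Matrix.IsHermitian.star_mulVec_dotProduct (hS : S.IsHermitian) (u w : ι → 𝕜) :
    star (S *ᵥ u) ⬝ᵥ w = star u ⬝ᵥ (S *ᵥ w) := by
  rw [star_mulVec, hS.eq, ← dotProduct_mulVec]

theorem Matrix.IsHermitian.star_add_mulVec_dotProduct_self (hS : S.IsHermitian) (a b : ι → 𝕜) :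
    star (a + S *ᵥ b) ⬝ᵥ (a + S *ᵥ b)
      = star a ⬝ᵥ a + star a ⬝ᵥ (S *ᵥ b) + star b ⬝ᵥ (S *ᵥ a) + star b ⬝ᵥ ((S * S) *ᵥ b) := by
  simp only [star_add, add_dotProduct, dotProduct_add, hS.star_mulVec_dotProduct, mulVec_mulVec]
  abel

end Hermitian

theorem sdeformation_identity_general (n : ℕ) (V S S' : ℝ → Matrix (Fin n) (Fin n) ℂ)
    (Φ Φ' Φ'' : ℝ → Fin n → ℂ) (E : ℝ)
    (hSherm : ∀ x, (S x).IsHermitian)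
    (hSd : ∀ i j, ∀ x : ℝ, HasDerivAt (fun t => S t i j) (S' x i j) x)
    (hΦd : ∀ i, ∀ x : ℝ, HasDerivAt (fun t => Φ t i) (Φ' x i) x)
    (hΦ'd : ∀ i, ∀ x : ℝ, HasDerivAt (fun t => Φ' t i) (Φ'' x i) x)
    (hschr : ∀ x : ℝ, -Φ'' x + V x *ᵥ Φ x = E • Φ x) :
    ∀ x : ℝ,
      -(deriv (fun t => star (Φ t) ⬝ᵥ Φ' t + star (Φ t) ⬝ᵥ (S t *ᵥ Φ t)) x)
        + star (Φ' x + S x *ᵥ Φ x) ⬝ᵥ (Φ' x + S x *ᵥ Φ x)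
        + star (Φ x) ⬝ᵥ ((V x + S' x - S x * S x) *ᵥ Φ x)
      = (E : ℂ) * (star (Φ x) ⬝ᵥ Φ x) := by
  intro x
  have hderiv := (hasDerivAt_star_dotProduct (hΦd · x) (hΦ'd · x)).fun_add
    (hasDerivAt_star_dotProduct (hΦd · x) (hasDerivAt_mulVec_apply (hSd · · x) (hΦd · x)))
  have hschr_form : star (Φ x) ⬝ᵥ (-Φ'' x + V x *ᵥ Φ x) = (E : ℂ) * (star (Φ x) ⬝ᵥ Φ x) := by
    rw [hschr, dotProduct_smul, Complex.real_smul]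
  rw [hderiv.deriv, (hSherm x).star_add_mulVec_dotProduct_self]
  simp only [dotProduct_add, dotProduct_neg, add_mulVec, sub_mulVec, dotProduct_sub] at hschr_form ⊢
  linear_combination hschr_form

/-- the basic S-deformation identity for coupled Schrödinger systems. -/
theorem sdeformation_identity (n : ℕ) (V S S' : ℝ → Matrix (Fin n) (Fin n) ℂ)
    (Φ Φ' Φ'' : ℝ → Fin n → ℂ) (E : ℝ)
    (hV : ∀ x, (V x).IsHermitian)
    (hSherm : ∀ x, (S x).IsHermitian)
    (hSd : ∀ i j, ∀ x : ℝ, HasDerivAt (fun t => S t i j) (S' x i j) x)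
    (hΦd : ∀ i, ∀ x : ℝ, HasDerivAt (fun t => Φ t i) (Φ' x i) x)
    (hΦ'd : ∀ i, ∀ x : ℝ, HasDerivAt (fun t => Φ' t i) (Φ'' x i) x)
    (hschr : ∀ x : ℝ, -Φ'' x + V x *ᵥ Φ x = E • Φ x) :
    ∀ x : ℝ,
      -(deriv (fun t => star (Φ t) ⬝ᵥ Φ' t + star (Φ t) ⬝ᵥ (S t *ᵥ Φ t)) x)
        + star (Φ' x + S x *ᵥ Φ x) ⬝ᵥ (Φ' x + S x *ᵥ Φ x)
        + star (Φ x) ⬝ᵥ ((V x + S' x - S x * S x) *ᵥ Φ x)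
      = (E : ℂ) * (star (Φ x) ⬝ᵥ Φ x) :=
  sdeformation_identity_general n V S S' Φ Φ' Φ'' E hSherm hSd hΦd hΦ'd hschr
end

section
/- Let V be a bounded piecewise-continuous n×n Hermitian-matrix-valued function on ℝ, S a continuous Hermitian-matrix-valued function with piecewise continuous bounded derivative satisfying V + S' - S² = K†K for some matrix-valued function K. Then for any real E < 0 there is no nontrivial square-integrable solution Φ of -Φ'' + VΦ = EΦ with Φ and Φ' vanishing at ±∞. (I.e., the existence of such an S-deformation with nonnegative deformed potential excludes negative-energy bound states.) -/
open Matrix Filter Topology MeasureTheory Set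

/-!
Consider the boundary term `F = Φ†(Φ' + SΦ)`. Differentiating it and using the Schrödinger
equation and `V + S' - S² = K†K` gives `F' = |Φ' + SΦ|² + |KΦ|² - E|Φ|²`, so for `E < 0` the
function `Re F` is nondecreasing. Because `S'` is bounded, `S` grows at most linearly, so
`|Re F(x)| ≲ |Φ||Φ'| + (1 + |x|)|Φ|²`. Since `|Φ|²` is integrable, this bound gets
arbitrarily small along sequences tending to `±∞`. A monotone function with this property is
identically zero, so `F' = 0`, and then `-E|Φ|² ≤ Re F' = 0` forces `Φ = 0`.
-/

section Derivatives

variable {ι κ 𝔸 : Type*} [Fintype ι] [NormedCommRing 𝔸] [NormedAlgebra ℝ 𝔸] {x : ℝ}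

theorem hasDerivAt_dotProduct {u v : ℝ → ι → 𝔸} {u' v' : ι → 𝔸}
    (hu : ∀ i, HasDerivAt (fun t => u t i) (u' i) x)
    (hv : ∀ i, HasDerivAt (fun t => v t i) (v' i) x) :
    HasDerivAt (fun t => u t ⬝ᵥ v t) (u' ⬝ᵥ v x + u x ⬝ᵥ v') x := by
  simpa only [dotProduct, ← Finset.sum_add_distrib] using
    HasDerivAt.fun_sum fun i _ => (hu i).fun_mul (hv i)

theorem hasDerivAt_mulVec_apply_s1 {M : ℝ → Matrix κ ι 𝔸} {M' : Matrix κ ι 𝔸} {u : ℝ → ι → 𝔸}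
    {u' : ι → 𝔸} (hM : ∀ i j, HasDerivAt (fun t => M t i j) (M' i j) x)
    (hu : ∀ j, HasDerivAt (fun t => u t j) (u' j) x) (i : κ) :
    HasDerivAt (fun t => (M t *ᵥ u t) i) ((M' *ᵥ u x + M x *ᵥ u') i) x :=
  hasDerivAt_dotProduct (hM i) hu

end Derivatives

theorem HasDerivAt.complex_re {f : ℝ → ℂ} {f' : ℂ} {x : ℝ} (h : HasDerivAt f f' x) :
    HasDerivAt (fun t => (f t).re) f'.re x := by
  simpa [Function.comp_def] using Complex.reCLM.hasFDerivAt.comp_hasDerivAt x h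

theorem norm_le_norm_zero_add_mul_abs {E : Type*} [NormedAddCommGroup E] [NormedSpace ℝ E]
    {f f' : ℝ → E} {C : ℝ} (hf : ∀ x, HasDerivAt f (f' x) x) (hC : ∀ x, ‖f' x‖ ≤ C) (x : ℝ) :
    ‖f x‖ ≤ ‖f 0‖ + C * |x| := by
  have h := convex_univ.norm_image_sub_le_of_norm_hasDerivWithin_le
    (fun t _ => (hf t).hasDerivWithinAt) (fun t _ => hC t) (mem_univ 0) (mem_univ x)
  rw [sub_zero, Real.norm_eq_abs] at h
  linarith [norm_sub_norm_le (f x) (f 0)]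

section Norms

variable {ι κ 𝔸 : Type*} [Fintype ι] [Fintype κ] [SeminormedRing 𝔸]

theorem norm_dotProduct_le (u v : ι → 𝔸) : ‖u ⬝ᵥ v‖ ≤ Fintype.card ι * (‖u‖ * ‖v‖) :=
  calc ‖u ⬝ᵥ v‖ ≤ ∑ i, ‖u i‖ * ‖v i‖ :=
        (norm_sum_le _ _).trans (Finset.sum_le_sum fun i _ => norm_mul_le _ _)
    _ ≤ ∑ _i : ι, ‖u‖ * ‖v‖ := by
        gcongr with i
        exacts [norm_le_pi_norm u i, norm_le_pi_norm v i]
    _ = Fintype.card ι * (‖u‖ * ‖v‖) := by simp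

theorem norm_dotProduct_mulVec_le (u : κ → 𝔸) (M : Matrix κ ι 𝔸) (v : ι → 𝔸) :
    ‖u ⬝ᵥ M *ᵥ v‖ ≤ (∑ i, ∑ j, ‖M i j‖) * (‖u‖ * ‖v‖) :=
  calc ‖u ⬝ᵥ M *ᵥ v‖ = ‖∑ i, ∑ j, u i * M i j * v j‖ := by
        simp only [dotProduct, mulVec, Finset.mul_sum, mul_assoc]
    _ ≤ ∑ i, ∑ j, ‖u i‖ * ‖M i j‖ * ‖v j‖ :=
        (norm_sum_le _ _).trans <| Finset.sum_le_sum fun i _ => (norm_sum_le _ _).trans <|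
          Finset.sum_le_sum fun j _ => (norm_mul_le _ _).trans <|
            mul_le_mul_of_nonneg_right (norm_mul_le _ _) (norm_nonneg _)
    _ ≤ ∑ i, ∑ j, ‖u‖ * ‖M i j‖ * ‖v‖ := by
        gcongr with i _ j
        exacts [norm_le_pi_norm u i, norm_le_pi_norm v j]
    _ = (∑ i, ∑ j, ‖M i j‖) * (‖u‖ * ‖v‖) := by
        simp only [Finset.sum_mul]
        exact Finset.sum_congr rfl fun i _ => Finset.sum_congr rfl fun j _ => by ring

end Norms

theorem MeasureTheory.Integrable.frequently_atTop_mul_lt {q : ℝ → ℝ} (hq : Integrable q)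
    (A B : ℝ) {ε : ℝ} (hε : 0 < ε) : ∃ᶠ y in atTop, (A + B * |y|) * q y < ε := by
  intro hge
  simp only [not_lt] at hge
  obtain ⟨N, hN⟩ := eventually_atTop.mp (hge.and (eventually_ge_atTop 1))
  set D := |A| + |B| + 1
  refine not_integrableOn_Ioi_inv (a := N) ((hq.abs.const_mul (D / ε)).integrableOn.mono'
    (by fun_prop) ((ae_restrict_iff' measurableSet_Ioi).2 (ae_of_all _ fun y hy => ?_)))
  obtain ⟨hεy, hy⟩ := hN y (le_of_lt hy)
  have hy0 : 0 < y := zero_lt_one.trans_le hy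
  rw [abs_of_pos hy0] at hεy
  have hcoef : |A + B * y| ≤ D * y := by
    have := abs_add_le A (B * y)
    rw [abs_mul, abs_of_pos hy0] at this
    nlinarith [abs_nonneg A, abs_nonneg B]
  have hεq : ε ≤ D * y * |q y| := calc
    ε ≤ (A + B * y) * q y := hεy
    _ ≤ |A + B * y| * |q y| := by rw [← abs_mul]; exact le_abs_self _
    _ ≤ D * y * |q y| := mul_le_mul_of_nonneg_right hcoef (abs_nonneg _)
  rw [Real.norm_eq_abs, abs_of_pos (inv_pos.2 hy0), div_mul_eq_mul_div, le_div_iff₀ hε,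
    inv_mul_le_iff₀ hy0]
  linarith

theorem MeasureTheory.Integrable.frequently_atBot_mul_lt {q : ℝ → ℝ} (hq : Integrable q)
    (A B : ℝ) {ε : ℝ} (hε : 0 < ε) : ∃ᶠ y in atBot, (A + B * |y|) * q y < ε :=
  tendsto_neg_atTop_atBot.frequently <|
    (hq.comp_neg.frequently_atTop_mul_lt A B hε).mono fun y hy => by rwa [abs_neg]

theorem Monotone.eq_zero_of_frequently_abs_lt {α : Type*} [Preorder α] {g : α → ℝ}
    (hg : Monotone g) (htop : ∀ ε > 0, ∃ᶠ y in atTop, |g y| < ε)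
    (hbot : ∀ ε > 0, ∃ᶠ y in atBot, |g y| < ε) : g = 0 := by
  funext x
  rw [Pi.zero_apply]
  refine le_antisymm (le_of_forall_pos_lt_add fun ε hε => ?_)
    (le_of_forall_pos_lt_add fun ε hε => ?_)
  · obtain ⟨y, hy, hxy⟩ := ((htop ε hε).and_eventually (eventually_ge_atTop x)).exists
    linarith [hg hxy, (abs_lt.1 hy).2]
  · obtain ⟨y, hy, hyx⟩ := ((hbot ε hε).and_eventually (eventually_le_atBot x)).exists
    linarith [hg hyx, (abs_lt.1 hy).1]

open scoped ComplexOrder in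
theorem re_star_dotProduct_self_nonneg {ι : Type*} [Fintype ι] (v : ι → ℂ) :
    0 ≤ (star v ⬝ᵥ v).re :=
  (Complex.nonneg_iff.1 (dotProduct_star_self_nonneg v)).1

open scoped ComplexOrder in
theorem re_star_dotProduct_self_eq_zero {ι : Type*} [Fintype ι] {v : ι → ℂ} :
    (star v ⬝ᵥ v).re = 0 ↔ v = 0 := by
  refine ⟨fun h => dotProduct_star_self_eq_zero.1 (Complex.ext h ?_), fun h => by simp [h]⟩
  exact ((Complex.nonneg_iff.1 (dotProduct_star_self_nonneg v)).2).symm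

section BoundaryTerm

variable {ι : Type*} [Fintype ι]

def boundaryTerm (S : ℝ → Matrix ι ι ℂ) (Φ Φ' : ℝ → ι → ℂ) (x : ℝ) : ℂ :=
  star (Φ x) ⬝ᵥ (Φ' x + S x *ᵥ Φ x)

theorem dotProduct_riccati {S S' V K : Matrix ι ι ℂ} (hS : S.IsHermitian)
    (hdef : V + S' - S * S = Kᴴ * K) {E : ℝ} {u u' u'' : ι → ℂ}
    (hu : -u'' + V *ᵥ u = E • u) :
    star u' ⬝ᵥ (u' + S *ᵥ u) + star u ⬝ᵥ (u'' + (S' *ᵥ u + S *ᵥ u')) =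
      star (u' + S *ᵥ u) ⬝ᵥ (u' + S *ᵥ u) + star (K *ᵥ u) ⬝ᵥ (K *ᵥ u) - E • (star u ⬝ᵥ u) := by
  have hK : star (K *ᵥ u) ⬝ᵥ (K *ᵥ u) = star u ⬝ᵥ ((V + S' - S * S) *ᵥ u) := by
    rw [star_mulVec, ← dotProduct_mulVec, mulVec_mulVec, ← hdef]
  have hSu : star (S *ᵥ u) = star u ᵥ* S := by rw [star_mulVec, hS.eq]
  have hu'' : u'' = V *ᵥ u - E • u := by rw [← hu]; abel
  rw [hK, hu'']
  simp only [star_add, add_dotProduct, dotProduct_add, hSu, ← dotProduct_mulVec, mulVec_mulVec,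
    add_mulVec, sub_mulVec, dotProduct_sub, dotProduct_smul]
  ring

variable {S S' V K : ℝ → Matrix ι ι ℂ} {Φ Φ' Φ'' : ℝ → ι → ℂ} {E x : ℝ}

theorem hasDerivAt_boundaryTerm (hS : (S x).IsHermitian)
    (hSd : ∀ i j, HasDerivAt (fun t => S t i j) (S' x i j) x)
    (hdef : V x + S' x - S x * S x = (K x)ᴴ * K x)
    (hΦd : ∀ i, HasDerivAt (fun t => Φ t i) (Φ' x i) x)
    (hΦ'd : ∀ i, HasDerivAt (fun t => Φ' t i) (Φ'' x i) x)
    (hschr : -Φ'' x + V x *ᵥ Φ x = E • Φ x) :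
    HasDerivAt (boundaryTerm S Φ Φ')
      (star (Φ' x + S x *ᵥ Φ x) ⬝ᵥ (Φ' x + S x *ᵥ Φ x) + star (K x *ᵥ Φ x) ⬝ᵥ (K x *ᵥ Φ x)
        - E • (star (Φ x) ⬝ᵥ Φ x)) x := by
  rw [← dotProduct_riccati hS hdef hschr]
  exact hasDerivAt_dotProduct (u := fun t => star (Φ t)) (v := fun t => Φ' t + S t *ᵥ Φ t)
    (fun i => (hΦd i).star) fun i => (hΦ'd i).add (hasDerivAt_mulVec_apply_s1 hSd hΦd i)

theorem exists_hasDerivAt_re_boundaryTerm_ge (hS : (S x).IsHermitian)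
    (hSd : ∀ i j, HasDerivAt (fun t => S t i j) (S' x i j) x)
    (hdef : V x + S' x - S x * S x = (K x)ᴴ * K x)
    (hΦd : ∀ i, HasDerivAt (fun t => Φ t i) (Φ' x i) x)
    (hΦ'd : ∀ i, HasDerivAt (fun t => Φ' t i) (Φ'' x i) x)
    (hschr : -Φ'' x + V x *ᵥ Φ x = E • Φ x) :
    ∃ d, HasDerivAt (fun t => (boundaryTerm S Φ Φ' t).re) d x ∧
      -E * (star (Φ x) ⬝ᵥ Φ x).re ≤ d := by
  refine ⟨_, (hasDerivAt_boundaryTerm hS hSd hdef hΦd hΦ'd hschr).complex_re, ?_⟩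
  simp only [Complex.sub_re, Complex.add_re, Complex.real_smul, Complex.re_ofReal_mul]
  linarith [re_star_dotProduct_self_nonneg (Φ' x + S x *ᵥ Φ x),
    re_star_dotProduct_self_nonneg (K x *ᵥ Φ x)]

theorem abs_re_boundaryTerm_le {C : ℝ}
    (hSd : ∀ i j, ∀ x, HasDerivAt (fun t => S t i j) (S' x i j) x)
    (hS'bdd : ∀ x i j, ‖S' x i j‖ ≤ C) (Φ Φ' : ℝ → ι → ℂ) (x : ℝ) :
    |(boundaryTerm S Φ Φ' x).re| ≤ Fintype.card ι * (‖Φ x‖ * ‖Φ' x‖)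
      + ((∑ i, ∑ j, ‖S 0 i j‖) + Fintype.card ι ^ 2 * C * |x|) * ‖Φ x‖ ^ 2 := by
  have hS : ∑ i, ∑ j, ‖S x i j‖ ≤ (∑ i, ∑ j, ‖S 0 i j‖) + Fintype.card ι ^ 2 * C * |x| :=
    calc ∑ i, ∑ j, ‖S x i j‖ ≤ ∑ i, ∑ j, (‖S 0 i j‖ + C * |x|) := by
          gcongr with i _ j
          exact norm_le_norm_zero_add_mul_abs (hSd i j) (fun t => hS'bdd t i j) x
      _ = (∑ i, ∑ j, ‖S 0 i j‖) + Fintype.card ι ^ 2 * C * |x| := by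
          simp only [Finset.sum_add_distrib, Finset.sum_const, Finset.card_univ, nsmul_eq_mul]
          ring
  calc |(boundaryTerm S Φ Φ' x).re| ≤ ‖boundaryTerm S Φ Φ' x‖ := Complex.abs_re_le_norm _
    _ ≤ ‖star (Φ x) ⬝ᵥ Φ' x‖ + ‖star (Φ x) ⬝ᵥ S x *ᵥ Φ x‖ := by
        rw [boundaryTerm, dotProduct_add]; exact norm_add_le _ _
    _ ≤ Fintype.card ι * (‖Φ x‖ * ‖Φ' x‖) + (∑ i, ∑ j, ‖S x i j‖) * (‖Φ x‖ * ‖Φ x‖) := by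
        gcongr
        · simpa only [norm_star] using norm_dotProduct_le (star (Φ x)) (Φ' x)
        · simpa only [norm_star] using norm_dotProduct_mulVec_le (star (Φ x)) (S x) (Φ x)
    _ ≤ _ := by rw [← sq]; gcongr

theorem frequently_abs_re_boundaryTerm_lt {l : Filter ℝ}
    (hSd : ∀ i j, ∀ x, HasDerivAt (fun t => S t i j) (S' x i j) x)
    (hS'bdd : ∃ C : ℝ, ∀ x i j, ‖S' x i j‖ ≤ C)
    (hΦ : Tendsto Φ l (𝓝 0)) (hΦ' : Tendsto Φ' l (𝓝 0))
    (hfreq : ∀ A B : ℝ, ∀ ε > 0, ∃ᶠ y in l, (A + B * |y|) * ‖Φ y‖ ^ 2 < ε)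
    {ε : ℝ} (hε : 0 < ε) :
    ∃ᶠ y in l, |(boundaryTerm S Φ Φ' y).re| < ε := by
  obtain ⟨C, hC⟩ := hS'bdd
  have hsmall : Tendsto (fun y => Fintype.card ι * (‖Φ y‖ * ‖Φ' y‖)) l (𝓝 0) := by
    simpa using (hΦ.norm.mul hΦ'.norm).const_mul (Fintype.card ι : ℝ)
  have hfar := hfreq (∑ i, ∑ j, ‖S 0 i j‖) (Fintype.card ι ^ 2 * C) (ε / 2) (half_pos hε)
  refine (hfar.and_eventually (hsmall.eventually (gt_mem_nhds (half_pos hε)))).mono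
    fun y ⟨hfar_y, hsmall_y⟩ => ?_
  linarith [abs_re_boundaryTerm_le hSd hC Φ Φ' y]

end BoundaryTerm

theorem no_negative_bound_state_of_sdeformation_general (n : ℕ)
    (V S S' K : ℝ → Matrix (Fin n) (Fin n) ℂ)
    (hSherm : ∀ x, (S x).IsHermitian)
    (hSd : ∀ i j, ∀ x : ℝ, HasDerivAt (fun t => S t i j) (S' x i j) x)
    (hS'bdd : ∃ C : ℝ, ∀ x i j, ‖S' x i j‖ ≤ C)
    (hdef : ∀ x, V x + S' x - S x * S x = (K x)ᴴ * K x)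
    (E : ℝ) (hE : E < 0)
    (Φ Φ' Φ'' : ℝ → Fin n → ℂ)
    (hΦd : ∀ i, ∀ x : ℝ, HasDerivAt (fun t => Φ t i) (Φ' x i) x)
    (hΦ'd : ∀ i, ∀ x : ℝ, HasDerivAt (fun t => Φ' t i) (Φ'' x i) x)
    (hschr : ∀ x : ℝ, -Φ'' x + V x *ᵥ Φ x = E • Φ x)
    (hL2 : MeasureTheory.Integrable (fun x => ‖Φ x‖ ^ 2))
    (hdecay_top : Filter.Tendsto Φ Filter.atTop (nhds 0))
    (hdecay_bot : Filter.Tendsto Φ Filter.atBot (nhds 0))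
    (hdecay'_top : Filter.Tendsto Φ' Filter.atTop (nhds 0))
    (hdecay'_bot : Filter.Tendsto Φ' Filter.atBot (nhds 0)) :
    Φ = 0 := by
  choose d hd hle using fun x => exists_hasDerivAt_re_boundaryTerm_ge (hSherm x)
    (fun i j => hSd i j x) (hdef x) (fun i => hΦd i x) (fun i => hΦ'd i x) (hschr x)
  have hmono : Monotone fun t => (boundaryTerm S Φ Φ' t).re :=
    monotone_of_hasDerivAt_nonneg hd fun x =>
      (mul_nonneg (neg_nonneg.2 hE.le) (re_star_dotProduct_self_nonneg _)).trans (hle x)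
  have hzero : (fun t => (boundaryTerm S Φ Φ' t).re) = 0 := hmono.eq_zero_of_frequently_abs_lt
    (fun _ hε => frequently_abs_re_boundaryTerm_lt hSd hS'bdd hdecay_top hdecay'_top
      (fun A B _ hε => hL2.frequently_atTop_mul_lt A B hε) hε)
    (fun _ hε => frequently_abs_re_boundaryTerm_lt hSd hS'bdd hdecay_bot hdecay'_bot
      (fun A B _ hε => hL2.frequently_atBot_mul_lt A B hε) hε)
  funext x
  have hdx : d x = 0 := (hd x).unique (by rw [hzero]; exact hasDerivAt_const x 0)
  refine re_star_dotProduct_self_eq_zero.1 (le_antisymm ?_ (re_star_dotProduct_self_nonneg _))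
  nlinarith [hle x]

/-- an S-deformation with nonnegative deformed potential `KᴴK`
excludes negative-energy bound states. -/
theorem no_negative_bound_state_of_sdeformation (n : ℕ)
    (V S S' K : ℝ → Matrix (Fin n) (Fin n) ℂ)
    (hV : ∀ x, (V x).IsHermitian)
    (hVpc : ∀ x, ∃ lL lR : Matrix (Fin n) (Fin n) ℂ,
      Filter.Tendsto V (nhdsWithin x (Set.Iio x)) (nhds lL) ∧
      Filter.Tendsto V (nhdsWithin x (Set.Ioi x)) (nhds lR))
    (hVbdd : ∃ C : ℝ, ∀ x i j, ‖V x i j‖ ≤ C)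
    (hSherm : ∀ x, (S x).IsHermitian)
    (hSd : ∀ i j, ∀ x : ℝ, HasDerivAt (fun t => S t i j) (S' x i j) x)
    (hS'bdd : ∃ C : ℝ, ∀ x i j, ‖S' x i j‖ ≤ C)
    (hdef : ∀ x, V x + S' x - S x * S x = (K x)ᴴ * K x)
    (E : ℝ) (hE : E < 0)
    (Φ Φ' Φ'' : ℝ → Fin n → ℂ)
    (hΦd : ∀ i, ∀ x : ℝ, HasDerivAt (fun t => Φ t i) (Φ' x i) x)
    (hΦ'd : ∀ i, ∀ x : ℝ, HasDerivAt (fun t => Φ' t i) (Φ'' x i) x)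
    (hschr : ∀ x : ℝ, -Φ'' x + V x *ᵥ Φ x = E • Φ x)
    (hL2 : MeasureTheory.Integrable (fun x => ‖Φ x‖ ^ 2))
    (hdecay_top : Filter.Tendsto Φ Filter.atTop (nhds 0))
    (hdecay_bot : Filter.Tendsto Φ Filter.atBot (nhds 0))
    (hdecay'_top : Filter.Tendsto Φ' Filter.atTop (nhds 0))
    (hdecay'_bot : Filter.Tendsto Φ' Filter.atBot (nhds 0)) :
    Φ = 0 :=
  no_negative_bound_state_of_sdeformation_general n V S S' K hSherm hSd hS'bdd hdef E hE Φ Φ' Φ''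
    hΦd hΦ'd hschr hL2 hdecay_top hdecay_bot hdecay'_top hdecay'_bot
end

section
/- Let S be a solution of the matrix Riccati equation S' = S² - (V - E) on an interval with V Hermitian-valued and E real. If S(x₀) is Hermitian at some point x₀, then S(x) is Hermitian for all x in the interval. -/
/-!
The defect `D := Sᴴ - S` satisfies the linear (Sylvester-type) equation `D' = Sᴴ D + D S`,
because `V - E` is Hermitian and `(S²)ᴴ - S² = Sᴴ (Sᴴ - S) + (Sᴴ - S) S`. Its right-hand side
is Lipschitz in `D`, uniformly on compact subintervals, so uniqueness of solutions of ODEs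
forces `D ≡ 0` once `D (x₀) = 0`.
-/

open Set

theorem ODE_linear_solution_eqOn_zero_of_mem_Ioo {E : Type*} [NormedAddCommGroup E]
    [NormedSpace ℝ E] {L : ℝ → E →L[ℝ] E} {f : ℝ → E} {a b t₀ : ℝ}
    (hL : ContinuousOn L (Ioo a b)) (hf : ∀ t ∈ Ioo a b, HasDerivAt f (L t (f t)) t)
    (ht₀ : t₀ ∈ Ioo a b) (hf₀ : f t₀ = 0) : EqOn f 0 (Ioo a b) := by
  intro t ht
  -- `L` is bounded, hence uniformly Lipschitz, on a compact interval `[c, d] ∋ t₀, t`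
  obtain ⟨c, hac, hc⟩ := exists_between (lt_min ht₀.1 ht.1)
  obtain ⟨d, hd, hdb⟩ := exists_between (max_lt ht₀.2 ht.2)
  have hcd : Icc c d ⊆ Ioo a b := Icc_subset_Ioo hac hdb
  obtain ⟨C, hC⟩ := isCompact_Icc.exists_bound_of_continuousOn (hL.mono hcd)
  have hlip (s) (hs : s ∈ Ioo c d) : LipschitzOnWith C.toNNReal (L s) univ :=
    ((L s).lipschitz.weaken
      (NNReal.le_toNNReal_of_coe_le (hC s (Ioo_subset_Icc_self hs)))).lipschitzOnWith
  have hzero (s) : HasDerivAt (0 : ℝ → E) (L s 0) s := by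
    rw [map_zero]; exact hasDerivAt_const s 0
  exact ODE_solution_unique_of_mem_Ioo hlip
    ⟨hc.trans_le (min_le_left _ _), (le_max_left _ _).trans_lt hd⟩
    (fun s hs => ⟨hf s (hcd (Ioo_subset_Icc_self hs)), mem_univ _⟩)
    (fun s _ => ⟨hzero s, mem_univ _⟩) hf₀
    ⟨hc.trans_le (min_le_right _ _), (le_max_right _ _).trans_lt hd⟩

section NormedAlgebra

variable {A : Type*} [NormedRing A] [NormedAlgebra ℝ A] {a b t₀ : ℝ}

theorem sylvester_ODE_solution_eqOn_zero_of_mem_Ioo {P Q D : ℝ → A}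
    (hP : ContinuousOn P (Ioo a b)) (hQ : ContinuousOn Q (Ioo a b))
    (hD : ∀ t ∈ Ioo a b, HasDerivAt D (P t * D t + D t * Q t) t)
    (ht₀ : t₀ ∈ Ioo a b) (hD₀ : D t₀ = 0) : EqOn D 0 (Ioo a b) :=
  ODE_linear_solution_eqOn_zero_of_mem_Ioo
    (L := fun t => ContinuousLinearMap.mul ℝ A (P t) + (ContinuousLinearMap.mul ℝ A).flip (Q t))
    (((ContinuousLinearMap.mul ℝ A).continuous.comp_continuousOn hP).add
      ((ContinuousLinearMap.mul ℝ A).flip.continuous.comp_continuousOn hQ)) hD ht₀ hD₀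

theorem isSelfAdjoint_of_hasDerivAt_riccati [StarRing A] [StarModule ℝ A] [ContinuousStar A]
    {S W : ℝ → A} (hS : ∀ t ∈ Ioo a b, HasDerivAt S (S t * S t - W t) t)
    (hW : ∀ t ∈ Ioo a b, IsSelfAdjoint (W t))
    (ht₀ : t₀ ∈ Ioo a b) (hS₀ : IsSelfAdjoint (S t₀)) :
    ∀ t ∈ Ioo a b, IsSelfAdjoint (S t) := by
  have hcont : ContinuousOn S (Ioo a b) := HasDerivAt.continuousOn hS
  have hD : ∀ t ∈ Ioo a b, HasDerivAt (fun u => star (S u) - S u)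
      (star (S t) * (star (S t) - S t) + (star (S t) - S t) * S t) t := fun t ht => by
    have hrhs : star (S t * S t - W t) - (S t * S t - W t) =
        star (S t) * (star (S t) - S t) + (star (S t) - S t) * S t := by
      rw [star_sub, star_mul, (hW t ht).star_eq]
      noncomm_ring
    exact hrhs ▸ (hS t ht).star.sub (hS t ht)
  intro t ht
  exact sub_eq_zero.1 <| sylvester_ODE_solution_eqOn_zero_of_mem_Ioo
    (continuous_star.comp_continuousOn hcont) hcont hD ht₀ (sub_eq_zero.2 hS₀.star_eq) ht

end NormedAlgebra

-- with the L2 operator norm `Matrix` is a C⋆-algebra, so `ContinuousStar` is available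
open scoped Matrix.Norms.L2Operator

/-- a solution of the matrix Riccati equation `S' = S² - (V - E)` which is
Hermitian at one point of an interval is Hermitian on the whole interval. -/
theorem riccati_hermitian_propagates (n : ℕ) (a b x₀ : ℝ)
    (V S S' : ℝ → Matrix (Fin n) (Fin n) ℂ) (E : ℝ)
    (hV : ∀ x, (V x).IsHermitian)
    (hSd : ∀ i j, ∀ x ∈ Set.Ioo a b, HasDerivAt (fun t => S t i j) (S' x i j) x)
    (heq : ∀ x ∈ Set.Ioo a b,
      S' x = S x * S x - (V x - (E : ℂ) • (1 : Matrix (Fin n) (Fin n) ℂ)))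
    (hx₀ : x₀ ∈ Set.Ioo a b) (hherm : (S x₀).IsHermitian) :
    ∀ x ∈ Set.Ioo a b, (S x).IsHermitian := by
  have hS : ∀ x ∈ Ioo a b, HasDerivAt S (S x * S x - (V x - (E : ℂ) • 1)) x := fun x hx =>
    heq x hx ▸ hasDerivAt_pi.2 fun i => hasDerivAt_pi.2 fun j => hSd i j x hx
  have hW (x) : IsSelfAdjoint (V x - (E : ℂ) • (1 : Matrix (Fin n) (Fin n) ℂ)) :=
    (hV x).isSelfAdjoint.sub (IsSelfAdjoint.smul (Complex.conj_ofReal E) (.one _))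
  exact fun x hx => (isSelfAdjoint_of_hasDerivAt_riccati hS (fun x _ => hW x) hx₀
    hherm.isSelfAdjoint x hx).isHermitian
end

section
/- Let S₁ and S₂ be two Hermitian solutions of the matrix Riccati equation V + S' - S² = 0 on an interval, corresponding to energies E₁ < E₂ respectively (i.e., Sᵢ' = Sᵢ² - V + Eᵢ), both continuous on [x₋, x₊]. If S₂(x₋) - S₁(x₋) is positive definite, then S₂(x) - S₁(x) is positive definite for all x ∈ [x₋, x₊]. -/
/-!
Let `U = S₂ - S₁`. If `U x *ᵥ v = 0`, then `S₂ x *ᵥ v = S₁ x *ᵥ v`, and since both are Hermitian,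
`v⋆ (S₂² - S₁²) v = ‖S₂ v‖² - ‖S₁ v‖² = 0`; hence `v⋆ U' v = (E₂ - E₁) ‖v‖² > 0` on the kernel of
`U`. At a first point where `U` stops being positive definite it is a positive semidefinite
limit of positive definite matrices, hence singular with a kernel vector `v`, and `t ↦ v⋆ U t v`
would reach its minimum `0` there from the left with positive derivative, which is impossible.
Positive definiteness being an open condition, real induction along `[x₋, x₊]` concludes.
-/

open Matrix Filter Set Topology
open scoped ComplexOrder

theorem Icc_induction {α : Type*} [ConditionallyCompleteLinearOrder α] [TopologicalSpace α]
    [OrderTopology α] {a b : α} {P : α → Prop} (ha : P a)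
    (hleft : ∀ x ∈ Ioc a b, (∀ y ∈ Ico a x, P y) → P x)
    (hright : ∀ x ∈ Ico a b, P x → ∀ᶠ y in 𝓝[>] x, P y) :
    ∀ x ∈ Icc a b, P x := by
  by_contra! ⟨x, hx, hPx⟩
  set B := {y ∈ Icc a b | ¬P y}
  have hBne : B.Nonempty := ⟨x, hx, hPx⟩
  have hBbdd : BddBelow B := ⟨a, fun y hy => hy.1.1⟩
  have hcx : sInf B ≤ x := csInf_le hBbdd ⟨hx, hPx⟩
  have hac : a ≤ sInf B := le_csInf hBne fun y hy => hy.1.1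
  have hbelow : ∀ y ∈ Ico a (sInf B), P y := fun y hy => by
    by_contra hPy
    exact (csInf_le hBbdd ⟨⟨hy.1, hy.2.le.trans (hcx.trans hx.2)⟩, hPy⟩).not_gt hy.2
  have hPc : P (sInf B) := hac.eq_or_lt.elim (fun h => h ▸ ha)
    fun h => hleft _ ⟨h, hcx.trans hx.2⟩ hbelow
  have hcb : sInf B < b := lt_of_le_of_ne (hcx.trans hx.2) fun h =>
    hPx (le_antisymm (hx.2.trans h.ge) hcx ▸ hPc)
  obtain ⟨u, hcu, hu⟩ := (mem_nhdsGT_iff_exists_Ioo_subset' hcb).1 (hright _ ⟨hac, hcb⟩ hPc)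
  refine (le_csInf hBne fun y hy => ?_).not_gt hcu
  by_contra! hyu
  have hcy : sInf B < y := lt_of_le_of_ne (csInf_le hBbdd hy) fun h => hy.2 (h ▸ hPc)
  exact hy.2 (hu ⟨hcy, hyu⟩)

theorem IsMinOn.hasDerivWithinAt_nonpos_of_right {f : ℝ → ℝ} {a b f' : ℝ} (hab : a < b)
    (hmin : IsMinOn f (Icc a b) b) (hf : HasDerivWithinAt f f' (Icc a b) b) : f' ≤ 0 := by
  have hcone : a - b ∈ posTangentConeAt (Icc a b) b :=
    sub_mem_posTangentConeAt_of_segment_subset (by rw [segment_symm, segment_eq_Icc hab.le])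
  have := hmin.localize.hasFDerivWithinAt_nonneg hf.hasFDerivWithinAt hcone
  rw [ContinuousLinearMap.toSpanSingleton_apply, smul_eq_mul] at this
  exact nonpos_of_mul_nonneg_right this (sub_neg.2 hab)

section CStarAlgebra

-- The L2 operator norm makes `Matrix ι ι ℂ` a C⋆-algebra whose topology is the entrywise one,
-- so the matrix lemmas of this section hold for the usual topology.
open scoped MatrixOrder Matrix.Norms.L2Operator

theorem IsStrictlyPositive.eventually_of_tendsto {A α : Type*} [CStarAlgebra A] [PartialOrder A]
    [StarOrderedRing A] {l : Filter α} {f : α → A} {a : A} (ha : IsStrictlyPositive a)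
    (hf : Tendsto f l (𝓝 a)) (hsa : ∀ᶠ x in l, IsSelfAdjoint (f x)) :
    ∀ᶠ x in l, IsStrictlyPositive (f x) := by
  cases subsingleton_or_nontrivial A with
  | inl _ => exact .of_forall fun _ => .of_subsingleton
  | inr _ =>
    obtain ⟨r, hr, hra⟩ := (CFC.exists_pos_algebraMap_le_iff ha.isSelfAdjoint).2
      fun x hx => ha.spectrum_pos hx
    have hnear : ∀ᶠ x in l, ‖f x - a‖ < r := by
      simpa [dist_eq_norm] using (Metric.tendsto_nhds.1 hf) r hr
    filter_upwards [hnear, hsa] with x hx hfx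
    have hle : algebraMap ℝ A (r - ‖f x - a‖) ≤ f x :=
      calc algebraMap ℝ A (r - ‖f x - a‖) = algebraMap ℝ A r + -algebraMap ℝ A ‖f x - a‖ := by
            rw [map_sub, sub_eq_add_neg]
        _ ≤ a + (f x - a) := add_le_add hra (hfx.sub ha.isSelfAdjoint).neg_algebraMap_norm_le_self
        _ = f x := add_sub_cancel a (f x)
    exact (isStrictlyPositive_algebraMap (sub_pos.2 hx)).of_le hle

variable {ι : Type*} [Fintype ι] [DecidableEq ι]

theorem Matrix.PosDef.eventually_of_tendsto {α : Type*} {l : Filter α} {U : α → Matrix ι ι ℂ}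
    {A : Matrix ι ι ℂ} (hA : A.PosDef) (hU : Tendsto U l (𝓝 A))
    (hherm : ∀ᶠ x in l, (U x).IsHermitian) : ∀ᶠ x in l, (U x).PosDef :=
  (hA.isStrictlyPositive.eventually_of_tendsto hU (hherm.mono fun _ h => h.isSelfAdjoint)).mono
    fun _ h => h.posDef

theorem Matrix.posSemidef_of_tendsto {α : Type*} {l : Filter α} [l.NeBot] {U : α → Matrix ι ι ℂ}
    {A : Matrix ι ι ℂ} (hU : Tendsto U l (𝓝 A)) (hpos : ∀ᶠ x in l, (U x).PosSemidef) :
    A.PosSemidef :=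
  (ge_of_tendsto hU (hpos.mono fun _ h => h.nonneg)).posSemidef

end CStarAlgebra

namespace Matrix

variable {ι : Type*} [Fintype ι]

theorem hasDerivWithinAt_dotProduct_mulVec {𝕜 𝔸 : Type*} [NontriviallyNormedField 𝕜]
    [NormedRing 𝔸] [NormedAlgebra 𝕜 𝔸] {M : 𝕜 → Matrix ι ι 𝔸} {M' : Matrix ι ι 𝔸} {s : Set 𝕜}
    {x : 𝕜} (hM : ∀ i j, HasDerivWithinAt (fun t => M t i j) (M' i j) s x) (u w : ι → 𝔸) :
    HasDerivWithinAt (fun t => u ⬝ᵥ M t *ᵥ w) (u ⬝ᵥ M' *ᵥ w) s x := by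
  simp only [dotProduct, mulVec]
  exact .fun_sum fun i _ => .const_mul (u i) (.fun_sum fun j _ => (hM i j).mul_const (w j))

theorem IsHermitian.star_dotProduct_mul_self_mulVec {α : Type*} [CommRing α] [StarRing α]
    {S : Matrix ι ι α} (hS : S.IsHermitian) (v : ι → α) :
    star v ⬝ᵥ (S * S) *ᵥ v = star (S *ᵥ v) ⬝ᵥ (S *ᵥ v) := by
  rw [← mulVec_mulVec, dotProduct_mulVec, star_mulVec, hS.eq]

variable [DecidableEq ι]

theorem star_dotProduct_riccati_sub_mulVec {α : Type*} [CommRing α] [StarRing α]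
    {S₁ S₂ : Matrix ι ι α} (V : Matrix ι ι α) (E₁ E₂ : α) (h₁ : S₁.IsHermitian)
    (h₂ : S₂.IsHermitian) {v : ι → α} (hv : S₂ *ᵥ v = S₁ *ᵥ v) :
    star v ⬝ᵥ ((S₂ * S₂ - V + E₂ • 1) - (S₁ * S₁ - V + E₁ • 1)) *ᵥ v
      = (E₂ - E₁) * (star v ⬝ᵥ v) := by
  have hsplit : (S₂ * S₂ - V + E₂ • 1) - (S₁ * S₁ - V + E₁ • 1)
      = S₂ * S₂ - S₁ * S₁ + (E₂ - E₁) • (1 : Matrix ι ι α) := by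
    rw [sub_smul]; abel
  rw [hsplit, add_mulVec, sub_mulVec, dotProduct_add, dotProduct_sub,
    h₂.star_dotProduct_mul_self_mulVec, h₁.star_dotProduct_mul_self_mulVec, hv, sub_self,
    zero_add, smul_mulVec, one_mulVec, dotProduct_smul, smul_eq_mul]

theorem PosDef.of_forall_Ico_of_deriv_pos_on_ker {U : ℝ → Matrix ι ι ℂ} {U' : Matrix ι ι ℂ}
    {a b : ℝ} (hab : a < b) (hU : ∀ i j, HasDerivWithinAt (fun t => U t i j) (U' i j) (Icc a b) b)
    (hpos : ∀ t ∈ Ico a b, (U t).PosDef)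
    (hker : ∀ v ≠ 0, U b *ᵥ v = 0 → 0 < star v ⬝ᵥ U' *ᵥ v) : (U b).PosDef := by
  have hcont : Tendsto U (𝓝[<] b) (𝓝 (U b)) :=
    tendsto_pi_nhds.2 fun i => tendsto_pi_nhds.2 fun j =>
      ((hU i j).continuousWithinAt.mono_of_mem_nhdsWithin (Icc_mem_nhdsLT hab)).tendsto
  have hpsd : (U b).PosSemidef := posSemidef_of_tendsto hcont
    (eventually_of_mem (Ico_mem_nhdsLT hab) fun t ht => (hpos t ht).posSemidef)
  refine hpsd.posDef_iff_det_ne_zero.2 fun hdet => ?_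
  obtain ⟨v, hv, hUv⟩ := exists_mulVec_eq_zero_iff.2 hdet
  have hmin : IsMinOn (fun t => (star v ⬝ᵥ U t *ᵥ v).re) (Icc a b) b := fun t ht => by
    rcases ht.2.lt_or_eq with htb | rfl
    · simpa [hUv] using ((hpos t ⟨ht.1, htb⟩).re_dotProduct_pos hv).le
    · exact le_refl (star v ⬝ᵥ U t *ᵥ v).re
  have hderiv : HasDerivWithinAt (fun t => (star v ⬝ᵥ U t *ᵥ v).re) (star v ⬝ᵥ U' *ᵥ v).re
      (Icc a b) b :=
    Complex.reCLM.hasFDerivAt.comp_hasDerivWithinAt b (hasDerivWithinAt_dotProduct_mulVec hU _ _)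
  exact (Complex.lt_def.1 (hker v hv hUv)).1.not_ge (hmin.hasDerivWithinAt_nonpos_of_right hab hderiv)

end Matrix

theorem riccati_energy_monotonicity_general (n : ℕ) (xm xp : ℝ)
    (V S₁ S₂ S₁' S₂' : ℝ → Matrix (Fin n) (Fin n) ℂ) (E₁ E₂ : ℝ) (hE : E₁ < E₂)
    (hH1 : ∀ x ∈ Set.Icc xm xp, (S₁ x).IsHermitian)
    (hH2 : ∀ x ∈ Set.Icc xm xp, (S₂ x).IsHermitian)
    (hd1 : ∀ i j, ∀ x ∈ Set.Icc xm xp,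
      HasDerivWithinAt (fun t => S₁ t i j) (S₁' x i j) (Set.Icc xm xp) x)
    (hd2 : ∀ i j, ∀ x ∈ Set.Icc xm xp,
      HasDerivWithinAt (fun t => S₂ t i j) (S₂' x i j) (Set.Icc xm xp) x)
    (heq1 : ∀ x ∈ Set.Icc xm xp,
      S₁' x = S₁ x * S₁ x - V x + (E₁ : ℂ) • (1 : Matrix (Fin n) (Fin n) ℂ))
    (heq2 : ∀ x ∈ Set.Icc xm xp,
      S₂' x = S₂ x * S₂ x - V x + (E₂ : ℂ) • (1 : Matrix (Fin n) (Fin n) ℂ))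
    (hpos : (S₂ xm - S₁ xm).PosDef) :
    ∀ x ∈ Set.Icc xm xp, (S₂ x - S₁ x).PosDef := by
  have hd : ∀ x ∈ Icc xm xp, ∀ i j, HasDerivWithinAt (fun t => (S₂ t - S₁ t) i j)
      ((S₂' x - S₁' x) i j) (Icc xm xp) x := fun x hx i j => (hd2 i j x hx).sub (hd1 i j x hx)
  refine Icc_induction hpos (fun x ⟨hmx, hxp⟩ hbelow => ?_) (fun x hx hPx => ?_)
  · have hx : x ∈ Icc xm xp := ⟨hmx.le, hxp⟩
    refine PosDef.of_forall_Ico_of_deriv_pos_on_ker hmx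
      (fun i j => (hd x hx i j).mono (Icc_subset_Icc_right hxp)) hbelow fun v hv hUv => ?_
    have hSv : S₂ x *ᵥ v = S₁ x *ᵥ v := sub_eq_zero.1 (by rwa [← sub_mulVec])
    rw [heq1 x hx, heq2 x hx, star_dotProduct_riccati_sub_mulVec _ _ _ (hH1 x hx) (hH2 x hx) hSv]
    exact mul_pos (by exact_mod_cast sub_pos.2 hE) (dotProduct_star_self_pos_iff.2 hv)
  · have hU : Tendsto (fun t => S₂ t - S₁ t) (𝓝[Icc xm xp] x) (𝓝 (S₂ x - S₁ x)) :=
      tendsto_pi_nhds.2 fun i => tendsto_pi_nhds.2 fun j =>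
        (hd x (Ico_subset_Icc_self hx) i j).continuousWithinAt
    exact nhdsWithin_le_of_mem (Icc_mem_nhdsGT_of_mem hx) (hPx.eventually_of_tendsto hU
      (eventually_mem_nhdsWithin.mono fun t ht => (hH2 t ht).sub (hH1 t ht)))

/-- Lemma 1: monotonicity in energy of Hermitian Riccati solutions.
If `S₂ - S₁` is positive definite at the left endpoint, it stays positive definite. -/
theorem riccati_energy_monotonicity (n : ℕ) (xm xp : ℝ) (hxx : xm ≤ xp)
    (V S₁ S₂ S₁' S₂' : ℝ → Matrix (Fin n) (Fin n) ℂ) (E₁ E₂ : ℝ) (hE : E₁ < E₂)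
    (hV : ∀ x, (V x).IsHermitian)
    (hVc : ∀ i j, Continuous fun t => V t i j)
    (hH1 : ∀ x ∈ Set.Icc xm xp, (S₁ x).IsHermitian)
    (hH2 : ∀ x ∈ Set.Icc xm xp, (S₂ x).IsHermitian)
    (hd1 : ∀ i j, ∀ x ∈ Set.Icc xm xp,
      HasDerivWithinAt (fun t => S₁ t i j) (S₁' x i j) (Set.Icc xm xp) x)
    (hd2 : ∀ i j, ∀ x ∈ Set.Icc xm xp,
      HasDerivWithinAt (fun t => S₂ t i j) (S₂' x i j) (Set.Icc xm xp) x)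
    (heq1 : ∀ x ∈ Set.Icc xm xp,
      S₁' x = S₁ x * S₁ x - V x + (E₁ : ℂ) • (1 : Matrix (Fin n) (Fin n) ℂ))
    (heq2 : ∀ x ∈ Set.Icc xm xp,
      S₂' x = S₂ x * S₂ x - V x + (E₂ : ℂ) • (1 : Matrix (Fin n) (Fin n) ℂ))
    (hpos : (S₂ xm - S₁ xm).PosDef) :
    ∀ x ∈ Set.Icc xm xp, (S₂ x - S₁ x).PosDef :=
  riccati_energy_monotonicity_general n xm xp V S₁ S₂ S₁' S₂' E₁ E₂ hE hH1 hH2 hd1 hd2 heq1 heq2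
    hpos
end

section
/- Let S_L and S_R be Hermitian solutions of V + S' - S² = 0 on ℝ with S_L ≡ 0 and S_R(x) positive definite for all x ≤ -L. Let Λ be an eigenvalue function of S_R - S_L with unit eigenvector e, satisfying Λ' = Λ(Λ + 2e†S_L e). If Λ(x₀) = 0 at some point x₀ > -L, then Λ ≡ 0 on ℝ; hence since Λ > 0 for x ≤ -L, S_R - S_L has no zero eigenvalue anywhere, i.e., S_R(x) - S_L(x) is positive definite for all x. -/
open Matrix Set
open scoped ComplexOrder

/-!
Writing `Λ' = c Λ` with `c = Λ + 2 Re ⟨e, S_L e⟩`, the coefficient `c` is locally bounded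
(`e` is a unit vector and `S_L` is continuous), so `Λ` solves a linear scalar ODE with a
locally Lipschitz right-hand side. The zero function solves the same ODE, hence by uniqueness
a zero of `Λ` anywhere forces `Λ ≡ 0`. Since `Λ > 0` at `-L`, `Λ` has no zero, and by the
intermediate value theorem it is positive everywhere.
-/

lemma norm_apply_le_one_of_star_dotProduct_self_eq_one {𝕜 ι : Type*} [RCLike 𝕜] [Fintype ι]
    {v : ι → 𝕜} (hv : star v ⬝ᵥ v = 1) (i : ι) : ‖v i‖ ≤ 1 := by
  have hnorm : ‖WithLp.toLp 2 v‖ ^ 2 = 1 := by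
    have h := inner_self_eq_norm_sq_to_K (𝕜 := 𝕜) (WithLp.toLp 2 v)
    rw [EuclideanSpace.inner_toLp_toLp, dotProduct_comm, hv] at h
    exact_mod_cast h.symm
  have hi := PiLp.norm_apply_le (WithLp.toLp 2 v) i
  nlinarith [norm_nonneg (WithLp.toLp 2 v)]

lemma norm_star_dotProduct_mulVec_le {𝕜 ι : Type*} [RCLike 𝕜] [Fintype ι]
    {v : ι → 𝕜} (hv : ∀ i, ‖v i‖ ≤ 1) (A : Matrix ι ι 𝕜) :
    ‖star v ⬝ᵥ (A *ᵥ v)‖ ≤ ∑ i, ∑ j, ‖A i j‖ := by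
  calc ‖star v ⬝ᵥ (A *ᵥ v)‖ ≤ ∑ i, ‖star (v i)‖ * ∑ j, ‖A i j‖ * ‖v j‖ := by
        refine (norm_sum_le _ _).trans (Finset.sum_le_sum fun i _ => ?_)
        rw [Pi.star_apply, norm_mul]
        gcongr
        exact (norm_sum_le _ _).trans_eq (by simp only [norm_mul])
    _ ≤ ∑ i, 1 * ∑ j, ‖A i j‖ * 1 := by gcongr with i _ j <;> simp [hv]
    _ = ∑ i, ∑ j, ‖A i j‖ := by simp

lemma eq_zero_of_hasDerivAt_eq_mul {f c : ℝ → ℝ} {t₀ : ℝ}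
    (hc : ∀ a b, ∃ C, ∀ t ∈ Icc a b, |c t| ≤ C)
    (hf : ∀ t, HasDerivAt f (c t * f t) t) (h₀ : f t₀ = 0) : f = 0 := by
  funext t
  obtain ⟨C, hC⟩ := hc (min t t₀ - 1) (max t t₀ + 1)
  have hlip : ∀ s ∈ Ioo (min t t₀ - 1) (max t t₀ + 1),
      LipschitzOnWith C.toNNReal (fun x => c s * x) univ := fun s hs =>
    (LipschitzWith.of_dist_le_mul fun x y => by
      rw [Real.dist_eq, Real.dist_eq, ← mul_sub, abs_mul]
      gcongr
      exact (hC s (Ioo_subset_Icc_self hs)).trans (Real.le_coe_toNNReal C)).lipschitzOnWith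
  have hmem : ∀ s, s = t ∨ s = t₀ → s ∈ Ioo (min t t₀ - 1) (max t t₀ + 1) := by
    rintro s (rfl | rfl) <;> constructor <;> grind
  exact ODE_solution_unique_of_mem_Ioo hlip (hmem t₀ (.inr rfl)) (fun s _ => ⟨hf s, trivial⟩)
    (fun s _ => ⟨by simp, trivial⟩) h₀ (hmem t (.inl rfl))

lemma pos_of_pos_of_forall_ne_zero {α : Type*} [TopologicalSpace α] [PreconnectedSpace α]
    {f : α → ℝ} (hf : Continuous f) {a : α} (ha : 0 < f a) (hne : ∀ x, f x ≠ 0) (x : α) :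
    0 < f x := by
  by_contra! hx
  obtain ⟨y, hy⟩ := intermediate_value_univ x a hf ⟨hx, ha.le⟩
  exact hne y hy

theorem eigenvalue_no_zero_crossing_general (n : ℕ) (L : ℝ)
    (SL SL' : ℝ → Matrix (Fin n) (Fin n) ℂ)
    (hdL : ∀ i j, ∀ x : ℝ, HasDerivAt (fun t => SL t i j) (SL' x i j) x)
    (Λ Λ' : ℝ → ℝ) (e : ℝ → Fin n → ℂ)
    (hunit : ∀ x : ℝ, star (e x) ⬝ᵥ e x = 1)
    (hΛd : ∀ x : ℝ, HasDerivAt Λ (Λ' x) x)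
    (hΛeq : ∀ x : ℝ, Λ' x = Λ x * (Λ x + 2 * (star (e x) ⬝ᵥ (SL x *ᵥ e x)).re))
    (hΛpos : ∀ x : ℝ, x ≤ -L → 0 < Λ x) :
    ((∃ x₀ : ℝ, -L < x₀ ∧ Λ x₀ = 0) → ∀ x : ℝ, Λ x = 0) ∧ (∀ x : ℝ, 0 < Λ x) := by
  have hSL : ∀ i j, Continuous fun t => SL t i j := fun i j =>
    continuous_iff_continuousAt.2 fun x => (hdL i j x).continuousAt
  have hΛ : Continuous Λ := continuous_iff_continuousAt.2 fun x => (hΛd x).continuousAt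
  set c : ℝ → ℝ := fun x => Λ x + 2 * (star (e x) ⬝ᵥ (SL x *ᵥ e x)).re
  have hc_le : ∀ x, |c x| ≤ |Λ x| + 2 * ∑ i, ∑ j, ‖SL x i j‖ := fun x => by
    refine (abs_add_le _ _).trans ?_
    rw [abs_mul, abs_two]
    gcongr
    exact (Complex.abs_re_le_norm _).trans <| norm_star_dotProduct_mulVec_le
      (norm_apply_le_one_of_star_dotProduct_self_eq_one (hunit x)) _
  have hc_bdd : ∀ a b, ∃ C, ∀ t ∈ Icc a b, |c t| ≤ C := fun a b => by
    obtain ⟨C, hC⟩ := isCompact_Icc.exists_bound_of_continuousOn (s := Icc a b)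
      (f := fun x => |Λ x| + 2 * ∑ i, ∑ j, ‖SL x i j‖) (by fun_prop)
    exact ⟨C, fun t ht => (hc_le t).trans ((le_abs_self _).trans (hC t ht))⟩
  have hzero : ∀ x₀, Λ x₀ = 0 → Λ = 0 := fun x₀ =>
    eq_zero_of_hasDerivAt_eq_mul hc_bdd fun t => (hΛeq t ▸ hΛd t).congr_deriv (mul_comm _ _)
  have hne : ∀ x, Λ x ≠ 0 := fun x hx =>
    (hΛpos (-L) le_rfl).ne' (congrFun (hzero x hx) (-L))
  exact ⟨fun ⟨x₀, _, hx₀⟩ => congrFun (hzero x₀ hx₀),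
    pos_of_pos_of_forall_ne_zero hΛ (hΛpos (-L) le_rfl) hne⟩

/-- eigenvalues of `S_R - S_L` cannot cross zero. If an eigenvalue path `Λ`
of `S_R - S_L` (with `S_L ≡ 0` and `S_R` positive definite for `x ≤ -L`), obeying
`Λ' = Λ(Λ + 2e†S_L e)`, vanishes at some `x₀ > -L`, then `Λ ≡ 0`; hence, since `Λ > 0`
for `x ≤ -L`, the eigenvalue stays positive everywhere. -/
theorem eigenvalue_no_zero_crossing (n : ℕ) (L : ℝ) (hL : 0 < L)
    (V SL SR SL' SR' : ℝ → Matrix (Fin n) (Fin n) ℂ)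
    (hV : ∀ x, (V x).IsHermitian)
    (hVsupp : ∀ x : ℝ, L ≤ |x| → V x = 0)
    (hHL : ∀ x, (SL x).IsHermitian) (hHR : ∀ x, (SR x).IsHermitian)
    (hdL : ∀ i j, ∀ x : ℝ, HasDerivAt (fun t => SL t i j) (SL' x i j) x)
    (hdR : ∀ i j, ∀ x : ℝ, HasDerivAt (fun t => SR t i j) (SR' x i j) x)
    (heqL : ∀ x : ℝ, V x + SL' x - SL x * SL x = 0)
    (heqR : ∀ x : ℝ, V x + SR' x - SR x * SR x = 0)
    (hSL0 : ∀ x : ℝ, x ≤ -L → SL x = 0)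
    (hSRpos : ∀ x : ℝ, x ≤ -L → (SR x).PosDef)
    (Λ Λ' : ℝ → ℝ) (e : ℝ → Fin n → ℂ)
    (heig : ∀ x : ℝ, (SR x - SL x) *ᵥ e x = (Λ x : ℂ) • e x)
    (hunit : ∀ x : ℝ, star (e x) ⬝ᵥ e x = 1)
    (hΛd : ∀ x : ℝ, HasDerivAt Λ (Λ' x) x)
    (hΛeq : ∀ x : ℝ, Λ' x = Λ x * (Λ x + 2 * (star (e x) ⬝ᵥ (SL x *ᵥ e x)).re))
    (hΛpos : ∀ x : ℝ, x ≤ -L → 0 < Λ x) :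
    ((∃ x₀ : ℝ, -L < x₀ ∧ Λ x₀ = 0) → ∀ x : ℝ, Λ x = 0) ∧ (∀ x : ℝ, 0 < Λ x) :=
  eigenvalue_no_zero_crossing_general n L SL SL' hdL Λ Λ' e hunit hΛd hΛeq hΛpos
end
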